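/- Let Π be a normal logic program and M an answer set of Π. If an atom A is true in the well-founded model of Π (A ∈ W⁺), then A ∈ M; and if A is false in the well-founded model (A ∈ W⁻), then A ∉ M. -/
import Mathlib


/-- A normal logic program rule `head ← pos, not neg`. -/
structure Rule (α : Type) where
  head : α
  pos : Set α
  neg : Set α

/-- Classical satisfaction of a rule. -/
def ruleSat {α : Type} (M : Set α) (r : Rule α) : Prop :=
  r.pos ⊆ M → (∀ b ∈ r.neg, b ∉ M) → r.head ∈ M

/-- The Gelfond–Lifschitz reduct Π^I. -/
def reduct {α : Type} (P : Set (Rule α)) (I : Set α) : Set (Rule α) :=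
  {r' | ∃ r ∈ P, (∀ b ∈ r.neg, b ∉ I) ∧ r' = ⟨r.head, r.pos, ∅⟩}

/-- Least Herbrand model of a (positive) program. -/
def leastModel {α : Type} (P : Set (Rule α)) : Set α :=
  ⋂₀ {M | ∀ r ∈ P, r.pos ⊆ M → r.head ∈ M}

/-- The Gelfond–Lifschitz operator Γ_Π. -/
def gamma {α : Type} (P : Set (Rule α)) (I : Set α) : Set α :=
  leastModel (reduct P I)

/-- I is an answer set (stable model) iff it is a fixpoint of Γ_Π. -/
def isAnswerSet {α : Type} (P : Set (Rule α)) (M : Set α) : Prop :=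
  gamma P M = M

/-- True atoms of the well-founded model: least fixpoint of Γ² (Knaster–Tarski form). -/
def wplus {α : Type} (P : Set (Rule α)) : Set α :=
  ⋂₀ {I | gamma P (gamma P I) ⊆ I}

/-- False atoms of the well-founded model: complement of the greatest fixpoint of Γ². -/
def wminus {α : Type} (P : Set (Rule α)) : Set α :=
  (⋃₀ {I | I ⊆ gamma P (gamma P I)})ᶜ

/-- Every answer set contains all well-founded-true atoms and no well-founded-false atoms. -/
theorem stmt19 {α : Type} (P : Set (Rule α)) (M : Set α) (h : isAnswerSet P M) (A : α) :
    (A ∈ wplus P → A ∈ M) ∧ (A ∈ wminus P → A ∉ M) := by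
  have hM : gamma P (gamma P M) = M := by rw [h, h]
  constructor
  · intro hA
    exact hA M hM.le
  · intro hA hAM
    exact hA ⟨M, hM.ge, hAM⟩
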